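/- arXiv:1902.11171 — 2 statements merged into one kernel-verified Lean document; each statement's English description precedes it below -/
import Mathlib

section
/- The number of natural numbers n ≤ x such that either the largest prime factor P(n) satisfies P(n) ≤ x^{1/log log x}, or P(n)^2 divides n, is O(x/(log x)^2) for sufficiently large x. -/
/-- Largest prime factor of `n` (0 if `n` has no prime factors). -/
def maxPrimeFac (n : ℕ) : ℕ := n.primeFactors.sup id

/-!
Put `y = x ^ (1 / log log x) = exp (log x / log log x)`. The `n ≤ x` with `P(n) > y` and
`P(n) ^ 2 ∣ n` number at most `∑_{p > y} x / p ^ 2 ≤ 2 x / y ≤ 2 x / (log x) ^ 2`.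
The `y`-smooth `n ≤ x` are counted by Rankin's trick with `σ = 1 - c / log y`: there are at most
`x ^ σ ∏_{p ≤ y} (1 - p ^ (-σ))⁻¹ ≤ x ^ σ exp (4 ∑_{p ≤ y} p ^ (-σ))` of them. Splitting the primes
into dyadic blocks `(2 ^ j, 2 ^ (j + 1)]`, each holding `O(2 ^ j / j)` primes by Chebyshev's bound,
gives `∑_{p ≤ y} p ^ (-σ) ≤ 8 e log log y + O_c(1)`, hence at most
`x exp (-c log log x + 32 e log log x + O_c(1))` smooth numbers; `c = 90 > 32 e + 2` makes this
`O(x / (log x) ^ 2)`.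
-/

open Finset Real Filter

theorem inv_one_sub_le_exp {a b : ℝ} (ha : 0 ≤ a) (hab : a ≤ b) (hb : b < 1) :
    (1 - a)⁻¹ ≤ exp ((1 - b)⁻¹ * a) := by
  have h1a : 0 < 1 - a := by linarith
  calc (1 - a)⁻¹ = a / (1 - a) + 1 := by field_simp; ring
    _ ≤ exp (a / (1 - a)) := add_one_le_exp _
    _ ≤ exp ((1 - b)⁻¹ * a) := by
      rw [inv_mul_eq_div]; gcongr

theorem prod_inv_one_sub_le_exp {ι : Type*} (s : Finset ι) {a : ι → ℝ} {b : ℝ} (hb : b < 1)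
    (ha : ∀ i ∈ s, 0 ≤ a i) (hab : ∀ i ∈ s, a i ≤ b) :
    ∏ i ∈ s, (1 - a i)⁻¹ ≤ exp ((1 - b)⁻¹ * ∑ i ∈ s, a i) := by
  rw [mul_sum, exp_sum]
  exact prod_le_prod (fun i hi => inv_nonneg.2 (by linarith [hab i hi]))
    fun i hi => inv_one_sub_le_exp (ha i hi) (hab i hi) hb

noncomputable def rpowNegHom (σ : ℝ) : ℕ →* ℝ where
  toFun n := (n : ℝ) ^ (-σ)
  map_one' := by simp
  map_mul' m n := by push_cast; exact mul_rpow (Nat.cast_nonneg m) (Nat.cast_nonneg n)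

theorem sum_smoothNumbersUpTo_rpow_neg_le {σ : ℝ} (hσ : 0 < σ) (N K : ℕ) :
    ∑ n ∈ N.smoothNumbersUpTo K, (n : ℝ) ^ (-σ) ≤ ∏ p ∈ K.primesBelow, (1 - (p : ℝ) ^ (-σ))⁻¹ := by
  have hlt : ∀ {p : ℕ}, p.Prime → ‖rpowNegHom σ p‖ < 1 := fun {p} hp => by
    change ‖(p : ℝ) ^ (-σ)‖ < 1
    rw [Real.norm_of_nonneg (rpow_nonneg (Nat.cast_nonneg _) _)]
    exact rpow_lt_one_of_one_lt_of_neg (by exact_mod_cast hp.one_lt) (by linarith)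
  have hsum := (EulerProduct.summable_and_hasSum_smoothNumbers_prod_primesBelow_geometric hlt K).2
  have hmem : ∀ n ∈ N.smoothNumbersUpTo K, n ∈ K.smoothNumbers :=
    fun n hn => (Nat.mem_smoothNumbersUpTo.1 hn).2
  rw [← sum_subtype_of_mem _ hmem]
  exact sum_le_hasSum _ (fun _ _ => rpow_nonneg (Nat.cast_nonneg _) _) hsum

theorem card_smoothNumbersUpTo_le {σ : ℝ} (hσ : 0 < σ) (N K : ℕ) :
    (#(N.smoothNumbersUpTo K) : ℝ) ≤
      (N : ℝ) ^ σ * ∏ p ∈ K.primesBelow, (1 - (p : ℝ) ^ (-σ))⁻¹ := by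
  calc (#(N.smoothNumbersUpTo K) : ℝ) = ∑ n ∈ N.smoothNumbersUpTo K, 1 := by simp
    _ ≤ ∑ n ∈ N.smoothNumbersUpTo K, (N : ℝ) ^ σ * (n : ℝ) ^ (-σ) := by
      refine sum_le_sum fun n hn => ?_
      obtain ⟨hnN, hn⟩ := Nat.mem_smoothNumbersUpTo.1 hn
      have hn0 : (0 : ℝ) < n :=
        by exact_mod_cast Nat.pos_of_ne_zero (Nat.ne_zero_of_mem_smoothNumbers hn)
      rw [rpow_neg hn0.le, ← div_eq_mul_inv, one_le_div (by positivity)]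
      exact rpow_le_rpow hn0.le (by exact_mod_cast hnN) hσ.le
    _ ≤ _ := by rw [← mul_sum]; gcongr; exact sum_smoothNumbersUpTo_rpow_neg_le hσ N K

theorem sum_primesLE_two_pow {M : Type*} [AddCommMonoid M] (f : ℕ → M) (J : ℕ) :
    ∑ p ∈ Nat.primesLE (2 ^ J), f p =
      ∑ j ∈ range J, ∑ p ∈ Ioc (2 ^ j) (2 ^ (j + 1)) with p.Prime, f p := by
  induction J with
  | zero => simp [Nat.primesLE_one]
  | succ J ih =>
    rw [sum_range_succ, ← ih]
    simp only [Nat.primesLE_eq_filter_Ioc_one, sum_filter]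
    exact (sum_Ioc_consecutive _ Nat.one_le_two_pow (Nat.pow_le_pow_right two_pos J.le_succ)).symm

theorem card_primes_Ioc_two_pow_mul_le (j : ℕ) :
    #{p ∈ Ioc (2 ^ j) (2 ^ (j + 1)) | p.Prime} * j ≤ 2 ^ (j + 2) := by
  set B := {p ∈ Ioc (2 ^ j) (2 ^ (j + 1)) | p.Prime}
  have hlog : ∀ p ∈ B, (j : ℝ) * log 2 ≤ log p := fun p hp => by
    have hp : 2 ^ j < p := (mem_Ioc.1 (mem_filter.1 hp).1).1
    rw [← Real.log_pow]
    exact log_le_log (by positivity) (by exact_mod_cast hp.le)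
  have hB : B ⊆ Nat.primesLE (2 ^ (j + 1)) := fun p hp => by
    simp only [B, mem_filter, mem_Ioc] at hp
    exact Nat.mem_primesLE.2 ⟨hp.1.2, hp.2⟩
  have hθ : (#B : ℝ) * (j * log 2) ≤ 2 ^ (j + 2) * log 2 := calc
    (#B : ℝ) * (j * log 2) ≤ ∑ p ∈ B, log p := by
      rw [← nsmul_eq_mul, ← sum_const]; exact sum_le_sum hlog
    _ ≤ ∑ p ∈ Nat.primesLE (2 ^ (j + 1)), log p :=
      sum_le_sum_of_subset_of_nonneg hB fun p _ _ => log_natCast_nonneg p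
    _ = Chebyshev.theta ((2 ^ (j + 1) : ℕ) : ℝ) := (Chebyshev.theta_eq_sum_primesLE_log _).symm
    _ ≤ log 4 * (2 ^ (j + 1) : ℕ) := Chebyshev.theta_le_log4_mul_x (Nat.cast_nonneg _)
    _ = 2 ^ (j + 2) * log 2 := by
      rw [show (4 : ℝ) = 2 ^ 2 by norm_num, Real.log_pow]; push_cast; ring
  have : (#B : ℝ) * j ≤ 2 ^ (j + 2) := by
    nlinarith [log_pos (one_lt_two : (1 : ℝ) < 2)]
  exact_mod_cast this

theorem sum_primes_Ioc_two_pow_rpow_neg_le {σ : ℝ} (hσ : 0 ≤ σ) (j : ℕ) :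
    (j + 1) * ∑ p ∈ Ioc (2 ^ j : ℕ) (2 ^ (j + 1)) with p.Prime, (p : ℝ) ^ (-σ) ≤
      8 * (2 : ℝ) ^ ((1 - σ) * j) := by
  set B := {p ∈ Ioc (2 ^ j : ℕ) (2 ^ (j + 1)) | p.Prime}
  have hcard : #B * (j + 1) ≤ 2 ^ (j + 3) := by
    have hB : #B ≤ 2 ^ j := (card_filter_le _ _).trans (by simp [Nat.card_Ioc, pow_succ]; omega)
    have hBj : #B * j ≤ 2 ^ (j + 2) := card_primes_Ioc_two_pow_mul_le j
    have h3 : 2 ^ (j + 3) = 2 ^ (j + 2) + 2 ^ j * 4 := by ring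
    rw [mul_add_one]; omega
  have hterm : ∀ p ∈ B, (p : ℝ) ^ (-σ) ≤ (2 : ℝ) ^ (j * -σ) := fun p hp => by
    have hp : 2 ^ j < p := (mem_Ioc.1 (mem_filter.1 hp).1).1
    rw [rpow_natCast_mul zero_le_two]
    exact rpow_le_rpow_of_nonpos (by positivity) (by exact_mod_cast hp.le) (by linarith)
  calc (j + 1) * ∑ p ∈ B, (p : ℝ) ^ (-σ) ≤ (j + 1) * (#B * (2 : ℝ) ^ (j * -σ)) := by
        gcongr; rw [← nsmul_eq_mul, ← sum_const]; exact sum_le_sum hterm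
    _ = ((#B * (j + 1) : ℕ) : ℝ) * (2 : ℝ) ^ (j * -σ) := by push_cast; ring
    _ ≤ ((2 ^ (j + 3) : ℕ) : ℝ) * (2 : ℝ) ^ (j * -σ) := by gcongr
    _ = 8 * (2 : ℝ) ^ ((1 - σ) * j) := by
      rw [mul_comm (1 - σ), mul_one_sub, rpow_sub two_pos, rpow_natCast, mul_neg,
        rpow_neg zero_le_two]
      push_cast; ring

theorem exp_mul_div_add_one_le {δ s : ℝ} (hδ : 0 ≤ δ) (hs : 0 ≤ s) :
    exp (δ * s) / (s + 1) ≤ exp 1 / (s + 1) + δ * exp (δ * s) := by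
  have hs1 : 0 < s + 1 := by linarith
  rcases le_or_gt (δ * (s + 1)) 1 with h | h
  · have : exp (δ * s) ≤ exp 1 := exp_le_exp.2 (by nlinarith)
    have : 0 ≤ δ * exp (δ * s) := by positivity
    have : exp (δ * s) / (s + 1) ≤ exp 1 / (s + 1) := by gcongr
    linarith
  · have : exp (δ * s) / (s + 1) ≤ δ * exp (δ * s) := by
      rw [div_le_iff₀ hs1]; nlinarith [exp_pos (δ * s)]
    have : 0 ≤ exp 1 / (s + 1) := by positivity
    linarith

theorem sum_primesLE_two_pow_rpow_neg_le {σ : ℝ} (hσ₀ : 0 ≤ σ) (hσ₁ : σ ≤ 1) (J : ℕ) :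
    ∑ p ∈ Nat.primesLE (2 ^ J), (p : ℝ) ^ (-σ) ≤
      8 * (exp 1 * (1 + log J) + (1 - σ) * log 2 * J * exp ((1 - σ) * log 2 * J)) := by
  set δ := (1 - σ) * log 2
  have hδ : 0 ≤ δ := mul_nonneg (by linarith) (log_nonneg one_le_two)
  have hblock : ∀ j : ℕ, ∑ p ∈ Ioc (2 ^ j : ℕ) (2 ^ (j + 1)) with p.Prime, (p : ℝ) ^ (-σ) ≤
      8 * (exp 1 / (j + 1) + δ * exp (δ * j)) := fun j => by
    have h := sum_primes_Ioc_two_pow_rpow_neg_le hσ₀ j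
    rw [rpow_def_of_pos two_pos, show log 2 * ((1 - σ) * j) = δ * j by ring] at h
    calc _ ≤ 8 * (exp (δ * j) / (j + 1)) := by
          rw [mul_div_assoc', le_div_iff₀' (by positivity)]; exact h
      _ ≤ _ := by gcongr; exact exp_mul_div_add_one_le hδ j.cast_nonneg
  have hharm : ∑ j ∈ range J, (1 : ℝ) / (j + 1) ≤ 1 + log J := by
    simpa [harmonic] using harmonic_le_one_add_log J
  have hexp_sum : ∑ j ∈ range J, exp (δ * j) ≤ J * exp (δ * J) := by
    refine (sum_le_card_nsmul (range J) _ (exp (δ * J)) fun j hj => ?_).trans_eq (by simp)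
    exact exp_le_exp.2 (by gcongr; exact_mod_cast (mem_range.1 hj).le)
  calc ∑ p ∈ Nat.primesLE (2 ^ J), (p : ℝ) ^ (-σ)
      ≤ ∑ j ∈ range J, 8 * (exp 1 / (j + 1) + δ * exp (δ * j)) := by
        rw [sum_primesLE_two_pow]; exact sum_le_sum fun j _ => hblock j
    _ = 8 * (exp 1 * ∑ j ∈ range J, (1 : ℝ) / (j + 1) + δ * ∑ j ∈ range J, exp (δ * j)) := by
        rw [mul_sum (a := exp 1), mul_sum (a := δ), ← sum_add_distrib, mul_sum]
        simp only [mul_one_div]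
    _ ≤ _ := by
        rw [mul_assoc δ]
        gcongr

theorem sum_primesLE_floor_rpow_neg_le {y σ : ℝ} (hy : 2 ≤ y) (hσ₀ : 0 ≤ σ) (hσ₁ : σ ≤ 1) :
    ∑ p ∈ Nat.primesLE ⌊y⌋₊, (p : ℝ) ^ (-σ) ≤
      8 * (exp 1 * (3 + log (log y)) + ((1 - σ) * log y + 1) * exp ((1 - σ) * log y + 1)) := by
  have hlog2 : 1 / 2 < log 2 := by linarith [log_two_gt_d9]
  have hlog2' : log 2 < 1 := by linarith [log_two_lt_d9]
  have hly : log 2 ≤ log y := log_le_log two_pos hy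
  set J := ⌈log y / log 2⌉₊
  have hJ_ge : log y ≤ J * log 2 := (div_le_iff₀ (by linarith)).1 (Nat.le_ceil _)
  have hJ_lt : J * log 2 < log y + log 2 := by
    have := Nat.ceil_lt_add_one (div_nonneg (by linarith) (by linarith) : 0 ≤ log y / log 2)
    rwa [← lt_div_iff₀ (by linarith), add_div, div_self (by linarith)]
  have hyJ : ⌊y⌋₊ ≤ 2 ^ J := by
    refine Nat.floor_le_of_le ?_
    rw [← log_le_log_iff (by linarith) (by positivity), Nat.cast_pow, Real.log_pow]
    push_cast; exact hJ_ge
  have hJ_pos : (0 : ℝ) < J := by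
    have : (0 : ℝ) < J * log 2 := by linarith
    exact pos_of_mul_pos_left this (by linarith)
  have hlogJ : 1 + log J ≤ 3 + log (log y) := by
    have : (J : ℝ) ≤ 4 * log y := by nlinarith
    have := log_le_log hJ_pos this
    rw [log_mul (by norm_num) (by linarith)] at this
    have : log 4 < 2 := by
      rw [show (4 : ℝ) = 2 ^ 2 by norm_num, Real.log_pow]; push_cast; linarith
    linarith
  have hδJ : (1 - σ) * log 2 * J ≤ (1 - σ) * log y + 1 := by
    nlinarith
  calc ∑ p ∈ Nat.primesLE ⌊y⌋₊, (p : ℝ) ^ (-σ)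
      ≤ ∑ p ∈ Nat.primesLE (2 ^ J), (p : ℝ) ^ (-σ) :=
        sum_le_sum_of_subset_of_nonneg (Nat.primesLE_mono hyJ) fun _ _ _ => by positivity
    _ ≤ 8 * (exp 1 * (1 + log J) + (1 - σ) * log 2 * J * exp ((1 - σ) * log 2 * J)) :=
        sum_primesLE_two_pow_rpow_neg_le hσ₀ hσ₁ J
    _ ≤ _ := by
        have : 0 ≤ 1 - σ := by linarith
        have : 0 ≤ (1 - σ) * log 2 * J := by positivity
        have : 0 ≤ (1 - σ) * log y + 1 := by linarith
        gcongr

theorem rpow_neg_le_three_quarters {p σ : ℝ} (hp : 2 ≤ p) (hσ : 1 / 2 ≤ σ) : p ^ (-σ) ≤ 3 / 4 := by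
  calc p ^ (-σ) ≤ 2 ^ (-(1 / 2 : ℝ)) :=
        (rpow_le_rpow_of_nonpos two_pos hp (by linarith)).trans
          (rpow_le_rpow_of_exponent_le one_le_two (by linarith))
    _ = (√2)⁻¹ := by rw [rpow_neg zero_le_two, sqrt_eq_rpow]
    _ ≤ 3 / 4 := by
        rw [inv_le_comm₀ (by positivity) (by norm_num), le_sqrt (by norm_num) zero_le_two]
        norm_num

theorem card_smoothNumbersUpTo_floor_le {x y c : ℝ} (hx : 0 < x) (hy : 2 ≤ y) (hc : 0 ≤ c)
    (hcy : 2 * c ≤ log y) :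
    (#(⌊x⌋₊.smoothNumbersUpTo (⌊y⌋₊ + 1)) : ℝ) ≤
      x * exp (-(c * log x / log y) + 32 * exp 1 * log (log y) +
        32 * (3 * exp 1 + (c + 1) * exp (c + 1))) := by
  have hly : 0 < log y := log_pos (by linarith)
  set σ := 1 - c / log y with hσ
  have hσ_half : 1 / 2 ≤ σ := by
    rw [hσ, ← sub_nonneg, show 1 - c / log y - 1 / 2 = (log y - 2 * c) / (2 * log y) by
      field_simp; ring]
    exact div_nonneg (by linarith) (by positivity)
  have hσ₁ : σ ≤ 1 := by rw [hσ]; linarith [div_nonneg hc hly.le]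
  have hκ : (1 - σ) * log y = c := by rw [hσ]; field_simp; ring
  have hsum := sum_primesLE_floor_rpow_neg_le hy (by linarith) hσ₁
  rw [hκ] at hsum
  have hle : ∀ p ∈ Nat.primesLE ⌊y⌋₊, (p : ℝ) ^ (-σ) ≤ 3 / 4 := fun p hp =>
    rpow_neg_le_three_quarters (by exact_mod_cast Nat.two_le_of_mem_primesLE hp) hσ_half
  have hprod : ∏ p ∈ Nat.primesLE ⌊y⌋₊, (1 - (p : ℝ) ^ (-σ))⁻¹ ≤
      exp (4 * ∑ p ∈ Nat.primesLE ⌊y⌋₊, (p : ℝ) ^ (-σ)) :=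
    (prod_inv_one_sub_le_exp _ (by norm_num) (fun p _ => by positivity) hle).trans_eq
      (by norm_num)
  have hxσ : (⌊x⌋₊ : ℝ) ^ σ ≤ x * exp (-(c * log x / log y)) := by
    calc (⌊x⌋₊ : ℝ) ^ σ ≤ x ^ σ := rpow_le_rpow (by positivity) (Nat.floor_le hx.le) (by linarith)
      _ = x * exp (-(c * log x / log y)) := by
        rw [rpow_def_of_pos hx, hσ, mul_one_sub, sub_eq_add_neg, exp_add, exp_log hx]
        ring_nf
  calc (#(⌊x⌋₊.smoothNumbersUpTo (⌊y⌋₊ + 1)) : ℝ)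
      ≤ (⌊x⌋₊ : ℝ) ^ σ * ∏ p ∈ Nat.primesLE ⌊y⌋₊, (1 - (p : ℝ) ^ (-σ))⁻¹ :=
        card_smoothNumbersUpTo_le (by linarith) _ _
    _ ≤ x * exp (-(c * log x / log y)) * exp (4 * ∑ p ∈ Nat.primesLE ⌊y⌋₊, (p : ℝ) ^ (-σ)) := by
        refine mul_le_mul hxσ hprod (prod_nonneg fun p hp => ?_) (by positivity)
        exact inv_nonneg.2 (by linarith [hle p hp])
    _ ≤ _ := by
        rw [mul_assoc, ← exp_add]
        gcongr x * exp ?_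
        linarith

open scoped Classical in
theorem card_filter_exists_sq_dvd_le (N M : ℕ) :
    (#{n ∈ Icc 1 N | ∃ p, M < p ∧ p ^ 2 ∣ n} : ℝ) ≤ 2 * N / (M + 1) := by
  have hsub : {n ∈ Icc 1 N | ∃ p, M < p ∧ p ^ 2 ∣ n} ⊆
      (Ioo M (N + 1)).biUnion fun p => {n ∈ Ioc 0 N | p ^ 2 ∣ n} := by
    intro n hn
    simp only [mem_filter, mem_Icc] at hn
    obtain ⟨⟨hn1, hnN⟩, p, hMp, hpn⟩ := hn
    have hp : p ≤ n := (Nat.le_self_pow two_ne_zero p).trans (Nat.le_of_dvd hn1 hpn)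
    simp only [mem_biUnion, mem_Ioo, mem_filter, mem_Ioc]
    exact ⟨p, ⟨hMp, by omega⟩, ⟨by omega, hnN⟩, hpn⟩
  calc (#{n ∈ Icc 1 N | ∃ p, M < p ∧ p ^ 2 ∣ n} : ℝ)
      ≤ ∑ p ∈ Ioo M (N + 1), ((N / p ^ 2 : ℕ) : ℝ) := by
        simp_rw [← Nat.Ioc_filter_dvd_card_eq_div]
        exact_mod_cast (card_le_card hsub).trans card_biUnion_le
    _ ≤ ∑ p ∈ Ioo M (N + 1), (N : ℝ) * ((p : ℝ) ^ 2)⁻¹ := by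
        gcongr with p
        rw [← div_eq_mul_inv]
        exact_mod_cast Nat.cast_div_le
    _ ≤ 2 * N / (M + 1) := by
        rw [← mul_sum, mul_comm 2, mul_div_assoc]
        gcongr
        exact sum_Ioo_inv_sq_le M (N + 1)

theorem mem_smoothNumbers_of_maxPrimeFac_le {n m : ℕ} (hn : n ≠ 0) (h : maxPrimeFac n ≤ m) :
    n ∈ (m + 1).smoothNumbers := by
  refine Nat.mem_smoothNumbers'.2 fun p hp hpn => Nat.lt_succ_of_le (le_trans ?_ h)
  exact le_sup (f := id) (Nat.mem_primeFactors.2 ⟨hp, hpn, hn⟩)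

theorem card_filter_maxPrimeFac_le_or_sq_dvd_le {x y : ℝ} (hx : 0 ≤ x) (hy : 0 < y) :
    (#{n ∈ Icc 1 ⌊x⌋₊ | (maxPrimeFac n : ℝ) ≤ y ∨ maxPrimeFac n ^ 2 ∣ n} : ℝ) ≤
      #(⌊x⌋₊.smoothNumbersUpTo (⌊y⌋₊ + 1)) + 2 * x / y := by
  classical
  have hsub : {n ∈ Icc 1 ⌊x⌋₊ | (maxPrimeFac n : ℝ) ≤ y ∨ maxPrimeFac n ^ 2 ∣ n} ⊆
      ⌊x⌋₊.smoothNumbersUpTo (⌊y⌋₊ + 1) ∪ {n ∈ Icc 1 ⌊x⌋₊ | ∃ p, ⌊y⌋₊ < p ∧ p ^ 2 ∣ n} := by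
    intro n hn
    simp only [mem_filter, mem_Icc] at hn
    obtain ⟨⟨hn1, hnx⟩, hP⟩ := hn
    rcases le_or_gt (maxPrimeFac n : ℝ) y with hy' | hy'
    · refine mem_union_left _ (Nat.mem_smoothNumbersUpTo.2 ⟨hnx, ?_⟩)
      exact mem_smoothNumbers_of_maxPrimeFac_le (by omega) (Nat.le_floor hy')
    · refine mem_union_right _ (mem_filter.2 ⟨mem_Icc.2 ⟨hn1, hnx⟩, maxPrimeFac n, ?_, ?_⟩)
      · exact (Nat.floor_lt hy.le).2 hy'
      · exact hP.resolve_left hy'.not_ge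
  have hsq := card_filter_exists_sq_dvd_le ⌊x⌋₊ ⌊y⌋₊
  have hxy : 2 * (⌊x⌋₊ : ℝ) / (⌊y⌋₊ + 1) ≤ 2 * x / y := by
    gcongr
    · exact Nat.floor_le hx
    · exact (Nat.lt_floor_add_one y).le
  calc _ ≤ ((#(⌊x⌋₊.smoothNumbersUpTo (⌊y⌋₊ + 1)) +
        #{n ∈ Icc 1 ⌊x⌋₊ | ∃ p, ⌊y⌋₊ < p ∧ p ^ 2 ∣ n} : ℕ) : ℝ) := by
        exact_mod_cast (card_le_card hsub).trans (card_union_le _ _)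
    _ ≤ _ := by push_cast; linarith

theorem card_filter_maxPrimeFac_le_rpow_or_sq_dvd_le {x : ℝ} (hx : 0 < x)
    (hu : 1 ≤ log (log x)) (ht : 180 * log (log x) ^ 2 ≤ log x) :
    (#{n ∈ Icc 1 ⌊x⌋₊ |
        (maxPrimeFac n : ℝ) ≤ x ^ (1 / log (log x)) ∨ maxPrimeFac n ^ 2 ∣ n} : ℝ) ≤
      (exp (32 * (3 * exp 1 + 91 * exp 91)) + 2) * x / log x ^ 2 := by
  set t := log x with ht_def
  set u := log t
  set K := 32 * (3 * exp 1 + 91 * exp 91)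
  have ht180 : 180 ≤ t := by nlinarith
  have ht0 : 0 < t := by linarith
  have hlogy : log (x ^ (1 / u)) = t / u := by rw [log_rpow hx]; ring
  have hy : t ^ 2 ≤ x ^ (1 / u) := by
    rw [← log_le_log_iff (by positivity) (by positivity), hlogy, Real.log_pow,
      le_div_iff₀ (by linarith)]
    push_cast; nlinarith
  have hsmooth := card_smoothNumbersUpTo_floor_le hx (y := x ^ (1 / u)) (c := 90)
    (hy.trans' (by nlinarith)) (by norm_num) (by rw [hlogy, le_div_iff₀ (by linarith)]; nlinarith)
  rw [hlogy, ← ht_def, show 90 * t / (t / u) = 90 * u by field_simp] at hsmooth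
  norm_num only at hsmooth
  have ht2 : t ^ 2 = exp (2 * u) := by
    rw [show (2 : ℝ) * u = ((2 : ℕ) : ℝ) * u by norm_num, exp_nat_mul, exp_log ht0]
  have hexp : exp (-(90 * u) + 32 * exp 1 * log (t / u) + K) ≤ exp K / t ^ 2 := by
    have hloglog : log (t / u) ≤ u := log_le_log (by positivity) (div_le_self ht0.le hu)
    have hloglog₀ : 0 ≤ log (t / u) := log_nonneg ((one_le_div (by linarith)).2 (by nlinarith))
    have he : 32 * exp 1 ≤ 88 := by linarith [exp_one_lt_d9]
    rw [ht2, ← exp_sub]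
    gcongr
    nlinarith
  calc _ ≤ (#(⌊x⌋₊.smoothNumbersUpTo (⌊x ^ (1 / u)⌋₊ + 1)) : ℝ) + 2 * x / x ^ (1 / u) :=
        card_filter_maxPrimeFac_le_or_sq_dvd_le hx.le (by positivity)
    _ ≤ x * (exp K / t ^ 2) + 2 * x / t ^ 2 := by
        gcongr
        exact hsmooth.trans (by gcongr)
    _ = (exp K + 2) * x / t ^ 2 := by ring

theorem stmt_0 :
    ∃ C > (0:ℝ), ∃ x₀ : ℝ, ∀ x : ℝ, x₀ ≤ x →
      (((Finset.Icc 1 ⌊x⌋₊).filter (fun n : ℕ =>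
        (maxPrimeFac n : ℝ) ≤ x ^ (1 / Real.log (Real.log x)) ∨
          (maxPrimeFac n) ^ 2 ∣ n)).card : ℝ) ≤ C * x / (Real.log x) ^ 2 := by
  have hlarge : ∀ᶠ t in atTop, 1 ≤ log t ∧ 180 * log t ^ 2 ≤ t := by
    refine (tendsto_log_atTop.eventually_ge_atTop 1).and ?_
    filter_upwards [(isLittleO_pow_log_id_atTop (n := 2)).bound (by norm_num : (0 : ℝ) < 1 / 180),
      eventually_ge_atTop 0] with t ht ht₀
    rw [norm_pow, Real.norm_eq_abs, sq_abs, id, Real.norm_of_nonneg ht₀] at ht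
    linarith
  obtain ⟨x₀, hx₀⟩ := eventually_atTop.1
    ((eventually_gt_atTop 0).and (tendsto_log_atTop.eventually hlarge))
  exact ⟨_, by positivity, x₀, fun x hx =>
    card_filter_maxPrimeFac_le_rpow_or_sq_dvd_le (hx₀ x hx).1 (hx₀ x hx).2.1 (hx₀ x hx).2.2⟩
end

section
/- For x ≥ y ≥ 2 with (log x)^2 ≤ y ≤ x and u := (log x)/(log y), the number Ψ(x,y) of y-smooth integers n ≤ x satisfies Ψ(x,y) ≤ x/u^{u+o(u)} as u → ∞; in particular, for any ε > 0 there exists U such that whenever u ≥ U one has Ψ(x,y) ≤ x · u^{-(1-ε)u}. -/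
/-!
Summing Chebyshev's identity `log n = ∑_{p^k ∣ n} log p` over the `y`-smooth `n ≤ s` bounds
`(log s / 2) Ψ(s, y)` by `(log s / 2) Ψ(√s, y) + ∑_{p ≤ y, k ≥ 1} log p · Ψ(s / p^k, y)`.
With this recursion one proves `Ψ(s, y) ≤ B s exp (-(1 - ε) w log w)`, `w = log s / log y`, by
induction on `s`. Passing from `s` to `s / t` costs at most a factor `t ^ κ / t` with `κ ≤ 1/2`,
because `log w ≤ log y / 2 + 1` (this is where `(log x)^2 ≤ y` enters). Hence the prime powers
with `k ≥ 2` contribute a geometric series, and the primes contribute at most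
`(w / 12) ∑_{p ≤ y} log p / p ≤ (w / 12)(log y + 2)` by Mertens' estimate, which is small
against `log s = w log y`. For `w ≤ exp (6 / ε)` the bound follows from `Ψ(s, y) ≤ s` and the
choice of `B`. Finally `B` is absorbed into `u ^ (ε u)` once `u` is large.
-/

open Finset Real

namespace SmoothCount

open Classical in
noncomputable def smoothUpTo (x y : ℝ) : Finset ℕ :=
  (Icc 1 ⌊x⌋₊).filter fun n => ∀ p : ℕ, p.Prime → p ∣ n → (p : ℝ) ≤ y

noncomputable def Psi (x y : ℝ) : ℕ := #(smoothUpTo x y)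

variable {x y : ℝ}

lemma mem_smoothUpTo {n : ℕ} :
    n ∈ smoothUpTo x y ↔ (1 ≤ n ∧ n ≤ ⌊x⌋₊) ∧ ∀ p : ℕ, p.Prime → p ∣ n → (p : ℝ) ≤ y := by
  simp [smoothUpTo]

lemma Psi_le_self (hx : 0 ≤ x) : (Psi x y : ℝ) ≤ x := by
  classical
  have h : Psi x y ≤ ⌊x⌋₊ := (card_filter_le _ _).trans (by simp)
  exact (Nat.cast_le.mpr h).trans (Nat.floor_le hx)

lemma Psi_eq_zero_of_lt_one (hx : x < 1) : Psi x y = 0 := by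
  simp [Psi, smoothUpTo, Nat.floor_eq_zero.mpr hx]

lemma sum_div_mul_log_le_log_factorial (M : ℕ) :
    ∑ p ∈ Nat.primesLE M, ((M / p : ℕ) : ℝ) * log p ≤ log (M.factorial : ℝ) := by
  rw [log_nat_eq_sum_factorization, Finsupp.sum]
  have hsub : Nat.primesLE M ⊆ M.factorial.factorization.support := by
    intro p hp
    obtain ⟨hpM, hp⟩ := Nat.mem_primesLE.mp hp
    rw [Nat.support_factorization]
    exact Nat.mem_primeFactors.mpr ⟨hp, hp.dvd_factorial.mpr hpM, M.factorial_ne_zero⟩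
  refine (sum_le_sum fun p hp => ?_).trans
    (sum_le_sum_of_subset_of_nonneg hsub fun p _ _ => by positivity)
  obtain ⟨hpM, hp⟩ := Nat.mem_primesLE.mp hp
  have hdiv : M / p ≤ M.factorial.factorization p := by
    rw [← hp.pow_dvd_iff_le_factorization M.factorial_ne_zero,
      hp.pow_dvd_factorial_iff (Nat.lt_succ_of_le (Nat.log_le_self p M))]
    calc M / p = M / p ^ 1 := by rw [pow_one]
      _ ≤ ∑ i ∈ Ico 1 (M + 1), M / p ^ i :=
        single_le_sum (f := fun i => M / p ^ i) (fun _ _ => Nat.zero_le _)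
          (mem_Ico.mpr ⟨le_rfl, by linarith [hp.two_le]⟩)
  gcongr

lemma sum_log_div_le (M : ℕ) (hM : 1 ≤ M) :
    ∑ p ∈ Nat.primesLE M, log p / p ≤ log M + log 4 := by
  have hM0 : (0 : ℝ) < M := by exact_mod_cast hM
  have hfloor : ∀ p ∈ Nat.primesLE M,
      (M : ℝ) * (log p / p) ≤ ((M / p : ℕ) : ℝ) * log p + log p := by
    intro p _
    have hMp : (M : ℝ) / p ≤ ((M / p : ℕ) : ℝ) + 1 := by
      rw [← Nat.floor_div_eq_div (K := ℝ)]
      exact (Nat.lt_floor_add_one _).le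
    calc (M : ℝ) * (log p / p) = (M / p) * log p := by ring
      _ ≤ (((M / p : ℕ) : ℝ) + 1) * log p := by gcongr
      _ = _ := by ring
  have htheta : ∑ p ∈ Nat.primesLE M, log p ≤ log 4 * M := by
    rw [← Chebyshev.theta_eq_sum_primesLE_log]
    exact Chebyshev.theta_le_log4_mul_x (Nat.cast_nonneg M)
  have hfact : log (M.factorial : ℝ) ≤ M * log M := by
    rw [← log_pow]
    exact log_le_log (by positivity) (by exact_mod_cast M.factorial_le_pow)
  have hsum := sum_le_sum hfloor
  rw [← mul_sum, sum_add_distrib] at hsum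
  have := sum_div_mul_log_le_log_factorial M
  refine le_of_mul_le_mul_left ?_ hM0
  nlinarith

lemma sum_log_div_le_log_add_two (hy : 1 ≤ y) :
    ∑ p ∈ Nat.primesLE ⌊y⌋₊, log p / p ≤ log y + 2 := by
  have hM : 1 ≤ ⌊y⌋₊ := Nat.one_le_floor_iff y |>.mpr hy
  have hlog : log (⌊y⌋₊ : ℝ) ≤ log y :=
    log_le_log (by exact_mod_cast hM) (Nat.floor_le (by linarith))
  have hlog4 : log 4 ≤ 2 := by
    rw [show (4 : ℝ) = 2 ^ 2 by norm_num, log_pow]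
    have := log_two_lt_d9
    push_cast
    linarith
  linarith [sum_log_div_le _ hM]

lemma log_eq_sum_sum_ite_pow_dvd {n K : ℕ} {P : Finset ℕ} (hn : n ≠ 0) (hnK : n ≤ K)
    (hP : n.primeFactors ⊆ P) (hPp : ∀ p ∈ P, p.Prime) :
    log n = ∑ p ∈ P, ∑ k ∈ Icc 1 K, if p ^ k ∣ n then log p else 0 := by
  have hinner : ∀ p ∈ P,
      ∑ k ∈ Icc 1 K, (if p ^ k ∣ n then log p else 0) = n.factorization p * log p := by
    intro p hp
    have hfilter : {k ∈ Icc 1 K | p ^ k ∣ n} = Icc 1 (n.factorization p) := by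
      ext k
      have := Nat.factorization_lt p hn
      simp only [mem_filter, mem_Icc, (hPp p hp).pow_dvd_iff_le_factorization hn]
      omega
    rw [← sum_filter, hfilter]
    simp
  rw [sum_congr rfl hinner, log_nat_eq_sum_factorization, Finsupp.sum, Nat.support_factorization]
  refine sum_subset hP fun p _ hp => ?_
  rw [← Nat.support_factorization, Finsupp.notMem_support_iff] at hp
  simp [hp]

lemma card_filter_dvd_le_Psi {d : ℕ} (hd : 0 < d) :
    #{n ∈ smoothUpTo x y | d ∣ n} ≤ Psi (x / d) y := by
  refine card_le_card_of_injOn (· / d) (fun n hn => ?_) fun a ha b hb hab => ?_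
  · obtain ⟨hnS, hdn⟩ := mem_filter.mp hn
    obtain ⟨⟨hn1, hnx⟩, hsmooth⟩ := mem_smoothUpTo.mp hnS
    refine mem_smoothUpTo.mpr ⟨⟨Nat.div_pos (Nat.le_of_dvd hn1 hdn) hd, Nat.le_floor ?_⟩,
      fun p hp hpn => hsmooth p hp (hpn.trans (Nat.div_dvd_of_dvd hdn))⟩
    rw [Nat.cast_div hdn (by positivity)]
    gcongr
    exact (Nat.le_floor_iff' (by omega)).mp hnx
  · exact (Nat.div_left_inj (mem_filter.mp ha).2 (mem_filter.mp hb).2).mp hab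

lemma sum_log_le_sum_sum_Psi :
    ∑ n ∈ smoothUpTo x y, log n ≤
      ∑ p ∈ Nat.primesLE ⌊y⌋₊, ∑ k ∈ Icc 1 ⌊x⌋₊, log p * Psi (x / (p : ℝ) ^ k) y := by
  calc ∑ n ∈ smoothUpTo x y, log n
      = ∑ n ∈ smoothUpTo x y, ∑ p ∈ Nat.primesLE ⌊y⌋₊, ∑ k ∈ Icc 1 ⌊x⌋₊,
          if p ^ k ∣ n then log p else 0 := by
        refine sum_congr rfl fun n hn => ?_
        obtain ⟨⟨hn1, hnx⟩, hsmooth⟩ := mem_smoothUpTo.mp hn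
        refine log_eq_sum_sum_ite_pow_dvd (by omega) hnx (fun p hp => ?_)
          fun p hp => Nat.prime_of_mem_primesLE hp
        obtain ⟨hp, hpn, -⟩ := Nat.mem_primeFactors.mp hp
        exact Nat.mem_primesLE.mpr ⟨Nat.le_floor (hsmooth p hp hpn), hp⟩
    _ = ∑ p ∈ Nat.primesLE ⌊y⌋₊, ∑ k ∈ Icc 1 ⌊x⌋₊,
          log p * #{n ∈ smoothUpTo x y | p ^ k ∣ n} := by
        rw [sum_comm]
        refine sum_congr rfl fun p _ => ?_
        rw [sum_comm]
        refine sum_congr rfl fun k _ => ?_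
        rw [← sum_filter, sum_const, nsmul_eq_mul, mul_comm]
    _ ≤ _ := by
        gcongr with p hp k
        have := card_filter_dvd_le_Psi (x := x) (y := y)
          (pow_pos (Nat.prime_of_mem_primesLE hp).pos k)
        exact_mod_cast this

lemma log_div_two_mul_Psi_le (hx : 1 ≤ x) :
    log x / 2 * Psi x y ≤ log x / 2 * Psi (√x) y + ∑ n ∈ smoothUpTo x y, log n := by
  classical
  set S := smoothUpTo x y
  set small := S.filter fun n : ℕ => (n : ℝ) ≤ √x
  set large := S.filter fun n : ℕ => ¬ (n : ℝ) ≤ √x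
  have hsplit : #small + #large = Psi x y := card_filter_add_card_filter_not _
  have hsmall : (#small : ℝ) ≤ Psi (√x) y := by
    refine Nat.cast_le.mpr (card_le_card fun n hn => ?_)
    obtain ⟨hnS, hn⟩ := mem_filter.mp hn
    obtain ⟨⟨hn1, -⟩, hsmooth⟩ := mem_smoothUpTo.mp hnS
    exact mem_smoothUpTo.mpr ⟨⟨hn1, Nat.le_floor hn⟩, hsmooth⟩
  have hlarge : #large * (log x / 2) ≤ ∑ n ∈ S, log n := by
    calc #large * (log x / 2) ≤ ∑ n ∈ large, log n := by
          rw [← nsmul_eq_mul]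
          refine card_nsmul_le_sum _ _ _ fun n hn => ?_
          rw [← log_sqrt (by linarith)]
          exact log_le_log (by positivity) (not_le.mp (mem_filter.mp hn).2).le
      _ ≤ ∑ n ∈ S, log n :=
          sum_le_sum_of_subset_of_nonneg (filter_subset _ _) fun n _ _ => log_natCast_nonneg n
  have hlog : 0 ≤ log x / 2 := by have := log_nonneg hx; positivity
  rw [← hsplit]
  push_cast
  nlinarith

noncomputable def posMulLog (w : ℝ) : ℝ := max w 1 * log (max w 1)

lemma posMulLog_of_one_le {w : ℝ} (hw : 1 ≤ w) : posMulLog w = w * log w := by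
  rw [posMulLog, max_eq_left hw]

lemma posMulLog_nonneg (w : ℝ) : 0 ≤ posMulLog w :=
  mul_nonneg (zero_le_one.trans (le_max_right w 1)) (log_nonneg (le_max_right w 1))

lemma monotone_posMulLog : Monotone posMulLog := fun a b hab => by
  have h1 : 1 ≤ max a 1 := le_max_right a 1
  have hab' : max a 1 ≤ max b 1 := max_le_max_right 1 hab
  exact mul_le_mul hab' (log_le_log (by linarith) hab') (log_nonneg h1) (by linarith)

lemma posMulLog_sub_le {w w' : ℝ} (hw : 1 ≤ w) (h : w' ≤ w) :
    posMulLog w - posMulLog w' ≤ (log w + 1) * (w - w') := by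
  set m := max w' 1
  have hm1 : 1 ≤ m := le_max_right w' 1
  have hmw : m ≤ w := max_le h hw
  have hw'm : w' ≤ m := le_max_left w' 1
  have hlog : m * (log w - log m) ≤ w - m := by
    have := log_le_sub_one_of_pos (show 0 < w / m by positivity)
    rw [log_div (by positivity) (by positivity)] at this
    calc m * (log w - log m) ≤ m * (w / m - 1) := by gcongr
      _ = w - m := by field_simp
  have hlogw := log_nonneg hw
  rw [posMulLog_of_one_le hw]
  change w * log w - m * log m ≤ _
  nlinarith [mul_le_mul_of_nonneg_left hw'm (by linarith : (0 : ℝ) ≤ log w + 1)]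

lemma exp_neg_mul_posMulLog_sub_le {θ w τ : ℝ} (hθ : 0 ≤ θ) (hw : 1 ≤ w) (hτ : 0 ≤ τ) :
    exp (-θ * posMulLog (w - τ)) ≤ exp (θ * (log w + 1) * τ) * exp (-θ * posMulLog w) := by
  rw [← exp_add, exp_le_exp]
  have h := posMulLog_sub_le hw (show w - τ ≤ w by linarith)
  rw [sub_sub_cancel] at h
  nlinarith [mul_le_mul_of_nonneg_left h hθ]

lemma sum_Icc_two_pow_le {r : ℝ} (hr0 : 0 ≤ r) (hr : r ≤ 3 / 4) (K : ℕ) :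
    ∑ k ∈ Icc 2 K, r ^ k ≤ 4 * r ^ 2 := by
  rw [← Ico_add_one_right_eq_Icc]
  calc ∑ k ∈ Ico 2 (K + 1), r ^ k ≤ r ^ 2 / (1 - r) := geom_sum_Ico_le_of_lt_one hr0 (by linarith)
    _ ≤ 4 * r ^ 2 := by
      rw [div_le_iff₀ (by linarith)]
      nlinarith [sq_nonneg r]

lemma sum_log_mul_Psi_div_pow_le {s A a : ℝ} {p K : ℕ} (hp : p.Prime) (hK : 1 ≤ K) (hA : 0 ≤ A)
    (hsqrt : ∀ t : ℝ, 2 ≤ t → (Psi (s / t) y : ℝ) ≤ A / √t)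
    (hp1 : (Psi (s / p) y : ℝ) ≤ a * A / p) :
    ∑ k ∈ Icc 1 K, log p * Psi (s / (p : ℝ) ^ k) y ≤ (a + 4) * A * (log p / p) := by
  have hp2 : (2 : ℝ) ≤ p := by exact_mod_cast hp.two_le
  have hlogp : 0 ≤ log p := log_natCast_nonneg p
  set r := (√(p : ℝ))⁻¹
  have hr : r ≤ 3 / 4 := by
    rw [inv_le_comm₀ (by positivity) (by norm_num), le_sqrt (by norm_num) (by positivity)]
    linarith
  have hr2 : r ^ 2 = 1 / p := by rw [inv_pow, sq_sqrt (by positivity), one_div]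
  have htail : ∀ k ∈ Icc 2 K, log p * Psi (s / (p : ℝ) ^ k) y ≤ log p * A * r ^ k := by
    intro k hk
    have h2k : (2 : ℝ) ≤ (p : ℝ) ^ k :=
      hp2.trans (le_self_pow₀ (by linarith) (by have := (mem_Icc.mp hk).1; omega))
    have hsqrtk : √((p : ℝ) ^ k) = √p ^ k := by
      rw [← sqrt_sq (by positivity : (0 : ℝ) ≤ √p ^ k), ← pow_mul, mul_comm, pow_mul,
        sq_sqrt (by positivity)]
    rw [mul_assoc, inv_pow, ← div_eq_mul_inv, ← hsqrtk]
    exact mul_le_mul_of_nonneg_left (hsqrt _ h2k) hlogp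
  have hgeom : ∑ k ∈ Icc 2 K, log p * Psi (s / (p : ℝ) ^ k) y ≤ log p * A * (4 * r ^ 2) :=
    calc ∑ k ∈ Icc 2 K, log p * Psi (s / (p : ℝ) ^ k) y
        ≤ log p * A * ∑ k ∈ Icc 2 K, r ^ k := (sum_le_sum htail).trans_eq (mul_sum _ _ _).symm
      _ ≤ log p * A * (4 * r ^ 2) := by gcongr; exact sum_Icc_two_pow_le (by positivity) hr K
  rw [← insert_Icc_add_one_left_eq_Icc hK, sum_insert (by simp), pow_one]
  calc log p * Psi (s / p) y + ∑ k ∈ Icc 2 K, log p * Psi (s / (p : ℝ) ^ k) y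
      ≤ log p * (a * A / p) + log p * A * (4 * r ^ 2) := by gcongr
    _ = (a + 4) * A * (log p / p) := by rw [hr2]; ring

lemma Psi_div_le_div_sqrt {s A κ : ℝ} (hA : 0 ≤ A) (hκ : κ ≤ 1 / 2)
    (hdiv : ∀ t : ℝ, 2 ≤ t → (Psi (s / t) y : ℝ) ≤ A * t ^ κ / t) (t : ℝ) (ht : 2 ≤ t) :
    (Psi (s / t) y : ℝ) ≤ A / √t := by
  have ht0 : 0 < t := by linarith
  calc (Psi (s / t) y : ℝ) ≤ A * t ^ κ / t := hdiv t ht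
    _ ≤ A * t ^ (1 / 2 : ℝ) / t := by
        gcongr
        linarith
    _ = A / √t := by
        rw [← sqrt_eq_rpow]
        field_simp
        rw [sq_sqrt ht0.le]

lemma Psi_le_of_Psi_div_le {s A κ a : ℝ} (hy : 1 ≤ y) (hs : 256 ≤ s) (hA : 0 ≤ A)
    (hκ0 : 0 ≤ κ) (hκ : κ ≤ 1 / 2) (ha : y ^ κ ≤ a)
    (hdiv : ∀ t : ℝ, 2 ≤ t → (Psi (s / t) y : ℝ) ≤ A * t ^ κ / t)
    (hsize : (a + 4) * (log y + 2) ≤ log s / 4) :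
    (Psi s y : ℝ) ≤ A := by
  have hv : 0 < log s := log_pos (by linarith)
  have hK : 1 ≤ ⌊s⌋₊ := Nat.one_le_floor_iff s |>.mpr (by linarith)
  have ha0 : 0 ≤ a := (rpow_nonneg (by linarith) κ).trans ha
  have hsqrt := Psi_div_le_div_sqrt hA hκ hdiv
  have hprime : ∀ p : ℕ, p.Prime → (p : ℝ) ≤ y → (Psi (s / p) y : ℝ) ≤ a * A / p := by
    intro p hp hpy
    have hp2 : (2 : ℝ) ≤ p := by exact_mod_cast hp.two_le
    calc (Psi (s / p) y : ℝ) ≤ A * (p : ℝ) ^ κ / p := hdiv p hp2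
      _ ≤ A * a / p := by gcongr; exact (rpow_le_rpow (by linarith) hpy hκ0).trans ha
      _ = a * A / p := by ring
  have hsum : ∑ n ∈ smoothUpTo s y, log n ≤ log s / 4 * A := by
    calc ∑ n ∈ smoothUpTo s y, log n
        ≤ ∑ p ∈ Nat.primesLE ⌊y⌋₊, ∑ k ∈ Icc 1 ⌊s⌋₊, log p * Psi (s / (p : ℝ) ^ k) y :=
          sum_log_le_sum_sum_Psi
      _ ≤ ∑ p ∈ Nat.primesLE ⌊y⌋₊, (a + 4) * A * (log p / p) := by
          refine sum_le_sum fun p hp => ?_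
          obtain ⟨hpy, hp⟩ := Nat.mem_primesLE.mp hp
          exact sum_log_mul_Psi_div_pow_le hp hK hA hsqrt
            (hprime p hp ((Nat.le_floor_iff (by linarith)).mp hpy))
      _ = (a + 4) * A * ∑ p ∈ Nat.primesLE ⌊y⌋₊, log p / p := (mul_sum _ _ _).symm
      _ ≤ (a + 4) * A * (log y + 2) := by
          gcongr
          exact sum_log_div_le_log_add_two hy
      _ ≤ log s / 4 * A := by nlinarith
  have hroot : (Psi (√s) y : ℝ) ≤ A / 4 := by
    have h16 : 16 ≤ √s := le_sqrt_of_sq_le (by linarith)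
    have h4 : 4 ≤ √(√s) := le_sqrt_of_sq_le (by linarith)
    have := hsqrt (√s) (by linarith)
    rw [div_sqrt] at this
    exact this.trans (div_le_div_of_nonneg_left hA (by norm_num) h4)
  have hcheb := log_div_two_mul_Psi_le (y := y) (by linarith : (1 : ℝ) ≤ s)
  nlinarith

lemma exp_mul_log_add_one_le {ε w : ℝ} (hε : 0 ≤ ε) (hw : 0 < w) (h : 6 ≤ ε * log w) :
    exp ((1 - ε) * (log w + 1)) ≤ w / 12 := by
  have h5 := quadratic_le_exp_of_nonneg (show (0 : ℝ) ≤ 5 by norm_num)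
  calc exp ((1 - ε) * (log w + 1)) ≤ exp (log w - 5) := by
        rw [exp_le_exp]
        nlinarith
    _ = w / exp 5 := by rw [exp_sub, exp_log hw]
    _ ≤ w / 12 := by gcongr; linarith

noncomputable def smoothBound (B ε y s : ℝ) : ℝ :=
  B * s * exp (-(1 - ε) * posMulLog (log s / log y))

lemma smoothBound_div_le {B ε y s t : ℝ} (hB : 0 ≤ B) (hε : ε ≤ 1) (hy : 1 < y) (hs : 0 < s)
    (hw : 1 ≤ log s / log y) (ht : 1 ≤ t) :
    smoothBound B ε y (s / t) ≤
      smoothBound B ε y s * t ^ ((1 - ε) * (log (log s / log y) + 1) / log y) / t := by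
  have hL : 0 < log y := log_pos hy
  have hτ : 0 ≤ log t / log y := div_nonneg (log_nonneg ht) hL.le
  have hsub : log (s / t) / log y = log s / log y - log t / log y := by
    rw [log_div hs.ne' (by linarith), sub_div]
  calc smoothBound B ε y (s / t)
      ≤ B * (s / t) * (exp ((1 - ε) * (log (log s / log y) + 1) * (log t / log y)) *
          exp (-(1 - ε) * posMulLog (log s / log y))) := by
        rw [smoothBound, hsub]
        gcongr
        exact exp_neg_mul_posMulLog_sub_le (by linarith) hw hτ
    _ = _ := by
        rw [smoothBound, rpow_def_of_pos (by linarith)]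
        ring_nf

lemma Psi_le_smoothBound_of_large {ε s B : ℝ} (hy : 2 ≤ y) (hε : 0 < ε) (hε2 : ε ≤ 1 / 2)
    (hB : 0 ≤ B) (hs : 1 ≤ s) (hw : exp (6 / ε) ≤ log s / log y)
    (hwy : log (log s / log y) ≤ log y / 2 + 1)
    (ih : ∀ t, 2 ≤ t → t ≤ s → (Psi (s / t) y : ℝ) ≤ smoothBound B ε y (s / t)) :
    (Psi s y : ℝ) ≤ smoothBound B ε y s := by
  set L := log y
  set w := log s / L
  set c := (1 - ε) * (log w + 1)
  have hL : 0 < L := log_pos (by linarith)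
  have hlogw : 6 / ε ≤ log w := by rw [← log_exp (6 / ε)]; exact log_le_log (exp_pos _) hw
  have h12 : 12 ≤ 6 / ε := by rw [le_div_iff₀ hε]; linarith
  have hw85 : 85 ≤ w := by
    have := quadratic_le_exp_of_nonneg (show (0 : ℝ) ≤ 12 by norm_num)
    linarith [exp_le_exp.mpr h12]
  have hεlogw : 6 ≤ ε * log w := by rw [div_le_iff₀ hε] at hlogw; linarith
  have hs256 : 256 ≤ s := by
    have := add_one_le_exp (log s)
    rw [exp_log (by linarith), ← div_mul_cancel₀ (log s) hL.ne'] at this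
    nlinarith
  have hbound : 0 ≤ smoothBound B ε y s := by rw [smoothBound]; positivity
  have hdiv : ∀ t : ℝ, 2 ≤ t → (Psi (s / t) y : ℝ) ≤ smoothBound B ε y s * t ^ (c / L) / t := by
    intro t ht
    rcases lt_or_ge s t with hst | hts
    · rw [Psi_eq_zero_of_lt_one ((div_lt_one (by linarith)).mpr hst), Nat.cast_zero]
      have := rpow_nonneg (by linarith : (0 : ℝ) ≤ t) (c / L)
      positivity
    · exact (ih t ht hts).trans <| smoothBound_div_le hB (by linarith) (by linarith)
        (by linarith) (by linarith) (by linarith)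
  -- `κ = c / L ≤ 1 / 2` because `ε log w ≥ 6` and `log w ≤ L / 2 + 1`; and `y ^ κ = exp c`.
  refine Psi_le_of_Psi_div_le (a := w / 12) (by linarith) hs256 hbound
    (div_nonneg (mul_nonneg (by linarith) (by linarith)) hL.le) ?_ ?_ hdiv ?_
  · rw [div_le_iff₀ hL]
    nlinarith
  · rw [rpow_def_of_pos (by linarith), mul_div_cancel₀ _ hL.ne']
    exact exp_mul_log_add_one_le hε.le (by linarith) hεlogw
  · rw [(div_mul_cancel₀ (log s) hL.ne').symm]
    nlinarith

lemma Psi_le_smoothBound_of_small {ε s E : ℝ} (hε : 0 ≤ ε) (hs : 0 ≤ s)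
    (hw : log s / log y ≤ E) :
    (Psi s y : ℝ) ≤ smoothBound (exp (posMulLog E)) ε y s := by
  have hmono := monotone_posMulLog hw
  have hnonneg := posMulLog_nonneg (log s / log y)
  have hone : 1 ≤ exp (posMulLog E) * exp (-(1 - ε) * posMulLog (log s / log y)) := by
    rw [← exp_add]
    exact one_le_exp (by nlinarith)
  calc (Psi s y : ℝ) ≤ s := Psi_le_self hs
    _ ≤ s * (exp (posMulLog E) * exp (-(1 - ε) * posMulLog (log s / log y))) :=
        le_mul_of_one_le_right hs hone
    _ = _ := by rw [smoothBound]; ring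

lemma log_log_div_log_le {s : ℝ} (hy : 2 ≤ y) (hxy : (log x) ^ 2 ≤ y) (hs : 1 < s)
    (hsx : s ≤ x) : log (log s / log y) ≤ log y / 2 + 1 := by
  have hL : log 2 ≤ log y := log_le_log (by norm_num) hy
  have hlog2 := log_two_gt_d9
  have hlogs : 0 < log s := log_pos hs
  have hloglog : 2 * log (log s) ≤ log y := by
    rw [← log_rpow hlogs]
    refine log_le_log (by positivity) ?_
    rw [rpow_two]
    exact le_trans (pow_le_pow_left₀ hlogs.le (log_le_log (by linarith) hsx) 2) hxy
  have hlogL : -log (log y) ≤ 1 := by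
    rw [← log_inv]
    have := log_le_sub_one_of_pos (inv_pos.mpr (by linarith : 0 < log y))
    have : (log y)⁻¹ ≤ 2 := by rw [inv_le_comm₀ (by linarith) (by norm_num)]; linarith
    linarith
  rw [log_div hlogs.ne' (by linarith)]
  linarith

theorem Psi_le_smoothBound {ε : ℝ} (hy : 2 ≤ y) (hε : 0 < ε) (hε2 : ε ≤ 1 / 2)
    (hxy : (log x) ^ 2 ≤ y) (hx : 1 ≤ x) :
    (Psi x y : ℝ) ≤ smoothBound (exp (posMulLog (exp (6 / ε)))) ε y x := by
  suffices h : ∀ n : ℕ, ∀ s, 1 ≤ s → s < 2 ^ n → s ≤ x →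
      (Psi s y : ℝ) ≤ smoothBound (exp (posMulLog (exp (6 / ε)))) ε y s by
    obtain ⟨n, hn⟩ := pow_unbounded_of_one_lt x (by norm_num : (1 : ℝ) < 2)
    exact h n x hx hn le_rfl
  -- The recursion only looks at `s / t` with `t ≥ 2`, so induct on `n` with `s < 2 ^ n`.
  intro n
  induction n with
  | zero => intro s hs hs1; rw [pow_zero] at hs1; linarith
  | succ n ih =>
    intro s hs hs2 hsx
    by_cases hw : exp (6 / ε) ≤ log s / log y
    · have hs1 : 1 < s := by
        rcases hs.eq_or_lt with rfl | h
        · rw [log_one, zero_div] at hw; linarith [exp_pos (6 / ε)]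
        · exact h
      refine Psi_le_smoothBound_of_large hy hε hε2 (exp_pos _).le hs hw
        (log_log_div_log_le hy hxy hs1 hsx) fun t ht hts => ih _ ?_ ?_ ?_
      · rwa [one_le_div (by linarith)]
      · rw [pow_succ] at hs2
        rw [div_lt_iff₀ (by linarith)]
        nlinarith
      · exact (div_le_self (by linarith) (by linarith)).trans hsx
    · exact Psi_le_smoothBound_of_small hε.le (by linarith) (not_le.mp hw).le

-- The induction is run with `ε / 2`; the threshold `exp (24 / ε ^ 2)` makes its constant
-- `exp (posMulLog (exp (12 / ε)))` at most `u ^ (ε u / 2)`.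
theorem Psi_le_mul_rpow {ε : ℝ} (hε : 0 < ε) (hε1 : ε ≤ 1) (hy : 2 ≤ y) (hx : 0 ≤ x)
    (hxy : (log x) ^ 2 ≤ y) (hU : exp (24 / ε ^ 2) ≤ log x / log y) :
    (Psi x y : ℝ) ≤ x * (log x / log y) ^ (-(1 - ε) * (log x / log y)) := by
  set u := log x / log y
  have hL : 0 < log y := log_pos (by linarith)
  have hlogu : 24 / ε ^ 2 ≤ log u := by
    rw [← log_exp (24 / ε ^ 2)]; exact log_le_log (exp_pos _) hU
  have h24 : 12 / ε ≤ 24 / ε ^ 2 := by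
    rw [div_le_div_iff₀ hε (by positivity)]; nlinarith
  have hE : exp (12 / ε) ≤ u := (exp_le_exp.mpr h24).trans hU
  have hu1 : 1 ≤ u := (one_le_exp (by positivity)).trans hE
  have hx1 : 1 ≤ x := by
    have : 0 < log x := by rw [← div_mul_cancel₀ (log x) hL.ne']; exact mul_pos (by linarith) hL
    exact ((log_pos_iff hx).mp this).le
  have hB : posMulLog (exp (12 / ε)) ≤ ε / 2 * (u * log u) := by
    rw [posMulLog_of_one_le (one_le_exp (by positivity)), log_exp]
    calc exp (12 / ε) * (12 / ε) = ε / 2 * (exp (12 / ε) * (24 / ε ^ 2)) := by field_simp; ring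
      _ ≤ ε / 2 * (u * log u) := by gcongr
  have hmain := Psi_le_smoothBound hy (half_pos hε) (by linarith) hxy hx1
  rw [show 6 / (ε / 2) = 12 / ε by ring] at hmain
  calc (Psi x y : ℝ) ≤ smoothBound (exp (posMulLog (exp (12 / ε)))) (ε / 2) y x := hmain
    _ = x * exp (posMulLog (exp (12 / ε)) + -(1 - ε / 2) * (u * log u)) := by
        rw [smoothBound, posMulLog_of_one_le hu1, exp_add]
        ring
    _ ≤ x * exp (log u * (-(1 - ε) * u)) := by gcongr; nlinarith
    _ = x * u ^ (-(1 - ε) * u) := by rw [rpow_def_of_pos (by linarith)]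

end SmoothCount

open Classical in
theorem stmt_1 :
    ∀ ε > (0:ℝ), ∃ U : ℝ, ∀ x y : ℝ, 2 ≤ y → y ≤ x → (Real.log x) ^ 2 ≤ y →
      U ≤ Real.log x / Real.log y →
      (((Finset.Icc 1 ⌊x⌋₊).filter (fun n : ℕ =>
          ∀ p : ℕ, p.Prime → p ∣ n → (p : ℝ) ≤ y)).card : ℝ) ≤
        x * (Real.log x / Real.log y) ^
          (-(1 - ε) * (Real.log x / Real.log y)) := by
  intro ε hε
  refine ⟨exp (24 / min ε 1 ^ 2), fun x y hy hyx hxy hU => ?_⟩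
  have hu : 1 ≤ log x / log y := (one_le_exp (by positivity)).trans hU
  calc (SmoothCount.Psi x y : ℝ)
      ≤ x * (log x / log y) ^ (-(1 - min ε 1) * (log x / log y)) :=
        SmoothCount.Psi_le_mul_rpow (lt_min hε one_pos) (min_le_right _ _) hy (by linarith) hxy hU
    _ ≤ x * (log x / log y) ^ (-(1 - ε) * (log x / log y)) := by
        refine mul_le_mul_of_nonneg_left (rpow_le_rpow_of_exponent_le hu ?_) (by linarith)
        nlinarith [min_le_left ε 1]
end
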